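/- (1) For every t ≥ 0 the limit g_r(t) := lim_{k→∞} (1/k)·log I_{k,r}(t) exists in ℝ. (2) There exists a unique s_r > 0 such that g_r(s_r/(s_r + r)) = 0. (3) With t_r := s_r/(s_r + r), there exists a constant C ≥ 1 such that C^{−1} · I_{k,r}(t_r) ≤ I_{p,r}(t_r) ≤ C · I_{k,r}(t_r) for all k, p ≥ 1. -/

import Mathlib

open Filter MeasureTheory
open scoped BigOperators ENNReal NNReal Topology

namespace LGQ

noncomputable section

/-- The alphabet `G = {(i,j) : 1 ≤ i ≤ n_j, 1 ≤ j ≤ m}`, encoded as a sigma type: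
an element is `⟨j, i⟩` with `j : Fin m` (the `y`-coordinate) and `i : Fin (n j)`. -/
abbrev Alph (m : ℕ) (n : Fin m → ℕ) := Σ j : Fin m, Fin (n j)

/-- A pair `σ = (σ_L, σ_R)` with `σ_L ∈ G^*` and `σ_R ∈ G_y^*`. -/
abbrev Wd (m : ℕ) (n : Fin m → ℕ) := List (Alph m n) × List (Fin m)

variable {m : ℕ} {n : Fin m → ℕ}

/-- `a_ω := ∏ a_{i_h j_h}` along a word `ω ∈ G^*`. -/
def aP (a : Alph m n → ℝ) (w : List (Alph m n)) : ℝ := (w.map a).prod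

/-- `b_τ := ∏ b_{j_h}` along a word `τ ∈ G_y^*`. -/
def bP (b : Fin m → ℝ) (τ : List (Fin m)) : ℝ := (τ.map b).prod

/-- `σ_y := (σ_L)_y ∗ σ_R` : the `y`-word of a pair `σ = σ_L ∗ σ_R`. -/
def sy (σ : Wd m n) : List (Fin m) := σ.1.map Sigma.fst ++ σ.2

/-- `Ψ_l := {σ = σ_L ∗ σ_R : σ_L ∈ G^l, σ_R ∈ G_y^*, b_{(σ_y)^-} ≥ a_{σ_L} > b_{σ_y}}`. -/
def Psi (a : Alph m n → ℝ) (b : Fin m → ℝ) (l : ℕ) : Set (Wd m n) :=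
  {σ | σ.1.length = l ∧ 1 ≤ σ.2.length ∧
    aP a σ.1 ≤ bP b (sy σ).dropLast ∧ bP b (sy σ) < aP a σ.1}

/-- `Ψ^* := ⋃_{l ≥ 1} Ψ_l`. -/
def PsiStar (a : Alph m n → ℝ) (b : Fin m → ℝ) : Set (Wd m n) :=
  {σ | ∃ l, 1 ≤ l ∧ σ ∈ Psi a b l}

/-- `q_j := Σ_{i=1}^{n_j} p_{ij}`. -/
def qf (p : Alph m n → ℝ) (j : Fin m) : ℝ := ∑ i : Fin (n j), p ⟨j, i⟩

/-- `p_{σ_L} := ∏ p_{i_h j_h}`. -/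
def pP (p : Alph m n → ℝ) (w : List (Alph m n)) : ℝ := (w.map p).prod

/-- `q_{σ_R} := ∏ q_{j_h}`. -/
def qP (p : Alph m n → ℝ) (τ : List (Fin m)) : ℝ := (τ.map (qf p)).prod

/-- `E_r(σ) := p_{σ_L} q_{σ_R} a_{σ_L}^r` (note `E_r(θ) = 1`). -/
def Er (a p : Alph m n → ℝ) (r : ℝ) (σ : Wd m n) : ℝ :=
  pP p σ.1 * qP p σ.2 * aP a σ.1 ^ r

/-- `a̲ := min a_{ij}`. -/
def aLo (a : Alph m n → ℝ) : ℝ := ⨅ g, a g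

/-- `ā := max a_{ij}`. -/
def aHi (a : Alph m n → ℝ) : ℝ := ⨆ g, a g

/-- `b̲ := min b_j`. -/
def bLo (b : Fin m → ℝ) : ℝ := ⨅ j, b j

/-- `b̄ := max b_j`. -/
def bHi (b : Fin m → ℝ) : ℝ := ⨆ j, b j

/-- `p̲ := min p_{ij}`. -/
def pLo (p : Alph m n → ℝ) : ℝ := ⨅ g, p g

/-- `q̲ := min q_j`. -/
def qLo (p : Alph m n → ℝ) : ℝ := ⨅ j, qf p j

/-- `A_1 := ⌊log a̲ / log b̄⌋ + 1`. -/
def A1 (a : Alph m n → ℝ) (b : Fin m → ℝ) : ℤ :=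
  ⌊Real.log (aLo a) / Real.log (bHi b)⌋ + 1

/-- `A_2 := ⌊log b̲ / log ā⌋ + 1`. -/
def A2 (a : Alph m n → ℝ) (b : Fin m → ℝ) : ℤ :=
  ⌊Real.log (bLo b) / Real.log (aHi a)⌋ + 1

/-- `A_3 := max_{(i,j)∈G} a_{ij}/b_j`. -/
def A3 (a : Alph m n → ℝ) (b : Fin m → ℝ) : ℝ := ⨆ g : Alph m n, a g / b g.1

/-- `A_4 := log A_3 / log b̲`. -/
def A4 (a : Alph m n → ℝ) (b : Fin m → ℝ) : ℝ := Real.log (A3 a b) / Real.log (bLo b)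

/-- `A_6 := ⌊1/A_4⌋`. -/
def A6 (a : Alph m n → ℝ) (b : Fin m → ℝ) : ℤ := ⌊1 / A4 a b⌋

/-- `η̲_r := p̲ q̲^{A_1} a̲^r`. -/
def etaLo (a : Alph m n → ℝ) (b : Fin m → ℝ) (p : Alph m n → ℝ) (r : ℝ) : ℝ :=
  pLo p * qLo p ^ A1 a b * aLo a ^ r

/-- `A_{5,r} := ⌊log(q̲² η̲_r)/(r·log ā)⌋`. -/
def A5 (a : Alph m n → ℝ) (b : Fin m → ℝ) (p : Alph m n → ℝ) (r : ℝ) : ℤ :=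
  ⌊Real.log (qLo p ^ 2 * etaLo a b p r) / (r * Real.log (aHi a))⌋

/-- `T_{1,r} := ⌊(A_1 + A_{5,r} + 3)/A_4⌋`. -/
def T1 (a : Alph m n → ℝ) (b : Fin m → ℝ) (p : Alph m n → ℝ) (r : ℝ) : ℤ :=
  ⌊((A1 a b + A5 a b p r + 3 : ℤ) : ℝ) / A4 a b⌋

/-- `ρ = σ^♭`:  for `σ ∈ Ψ_1`, `σ^♭ = θ`; for `σ ∈ Ψ_l` with `l ≥ 2`, `σ^♭` is the unique
`ρ ∈ Ψ_{l-1}` with `ρ_L = (σ_L)^-` and `ρ_y` an initial segment of `σ_y`. -/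
def IsFlat (a : Alph m n → ℝ) (b : Fin m → ℝ) (σ ρ : Wd m n) : Prop :=
  (σ.1.length = 1 ∧ ρ = (([], []) : Wd m n)) ∨
  (2 ≤ σ.1.length ∧ ρ ∈ Psi a b (σ.1.length - 1) ∧ ρ.1 = σ.1.dropLast ∧ sy ρ <+: sy σ)

/-- `Λ_{n,r} := {σ ∈ Ψ^* : E_r(σ^♭) ≥ η̲_r^n > E_r(σ)}`. -/
def Lam (a : Alph m n → ℝ) (b : Fin m → ℝ) (p : Alph m n → ℝ) (r : ℝ) (N : ℕ) :
    Set (Wd m n) :=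
  {σ | σ ∈ PsiStar a b ∧ ∃ ρ : Wd m n, IsFlat a b σ ρ ∧
    etaLo a b p r ^ N ≤ Er a p r ρ ∧ Er a p r σ < etaLo a b p r ^ N}

/-- `S_{n,r} := {σ ∈ Ψ^* : η̲_r^{n+1} ≤ E_r(σ) < η̲_r^n}`. -/
def Snr (a : Alph m n → ℝ) (b : Fin m → ℝ) (p : Alph m n → ℝ) (r : ℝ) (N : ℕ) :
    Set (Wd m n) :=
  {σ | σ ∈ PsiStar a b ∧ etaLo a b p r ^ (N + 1) ≤ Er a p r σ ∧
    Er a p r σ < etaLo a b p r ^ N}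

/-- `G_1(σ) := {ω ∈ S_{n,r} : σ_L ⪯ ω_L and σ_y ⪯ ω_y}`. -/
def G1 (a : Alph m n → ℝ) (b : Fin m → ℝ) (p : Alph m n → ℝ) (r : ℝ) (N : ℕ)
    (σ : Wd m n) : Set (Wd m n) :=
  {ω | ω ∈ Snr a b p r N ∧ σ.1 <+: ω.1 ∧ sy σ <+: sy ω}

/-- `Λ_h(σ) := {ρ ∈ Φ_{l+h} : σ ⪯ ρ}` (componentwise order on pairs). -/
def LamH (a : Alph m n → ℝ) (b : Fin m → ℝ) (σ : Wd m n) (h : ℕ) : Set (Wd m n) :=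
  {ρ | ρ ∈ Psi a b (σ.1.length + h) ∧ σ.1 <+: ρ.1 ∧ σ.2 <+: ρ.2}

/-- `I_{k,r}(t) := Σ_{ω∈Φ_k} E_r(ω)^t`. -/
def Ih (a : Alph m n → ℝ) (b : Fin m → ℝ) (p : Alph m n → ℝ) (r : ℝ) (k : ℕ) (t : ℝ) : ℝ :=
  ∑' ω : Psi a b k, Er a p r ω.1 ^ t

/-- `Υ_n(t,s) := Σ_{σ∈Ψ_n} (p_{σ_L} q_{σ_R})^t a_{σ_L}^s`. -/
def Ups (a : Alph m n → ℝ) (b : Fin m → ℝ) (p : Alph m n → ℝ) (N : ℕ) (t s : ℝ) : ℝ :=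
  ∑' σ : Psi a b N, (pP p σ.1.1 * qP p σ.1.2) ^ t * aP a σ.1.1 ^ s

/-- `τ_0 := ((1,j_0),(n_{j_0},j_0))`. -/
def tau0 (j0 : Fin m) (h : 2 ≤ n j0) : List (Alph m n) :=
  [⟨j0, ⟨0, by omega⟩⟩, ⟨j0, ⟨n j0 - 1, by omega⟩⟩]

/-- `σ̄` is a bar-extension of `σ ∈ Ψ_l`: `σ̄ ∈ Ψ_{l+2}`, `σ̄_L = σ_L ∗ τ_0`, `σ_R ⪯ σ̄_R`. -/
def BarExt (a : Alph m n → ℝ) (b : Fin m → ℝ) (j0 : Fin m) (h : 2 ≤ n j0)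
    (σ σb : Wd m n) : Prop :=
  σb ∈ Psi a b (σ.1.length + 2) ∧ σb.1 = σ.1 ++ tau0 j0 h ∧ σ.2 <+: σb.2

/-- cylinder set `[σ] ⊆ Φ_∞ = G^ℕ × G_y^ℕ`. -/
def Cyl (σ : Wd m n) : Set ((ℕ → Alph m n) × (ℕ → Fin m)) :=
  {x | (∀ i : ℕ, ∀ hi : i < σ.1.length, x.1 i = σ.1.get ⟨i, hi⟩) ∧
       (∀ i : ℕ, ∀ hi : i < σ.2.length, x.2 i = σ.2.get ⟨i, hi⟩)}

/-- the affine map `f_{ij}(x,y) = (a_{ij} x + c_{ij}, b_j y + d_j)`. -/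
def fmap (a : Alph m n → ℝ) (b : Fin m → ℝ) (c : Alph m n → ℝ) (d : Fin m → ℝ)
    (g : Alph m n) : ℝ × ℝ → ℝ × ℝ :=
  fun x => (a g * x.1 + c g, b g.1 * x.2 + d g.1)

/-- `A_{L,σ} = c_{i_1j_1} + Σ_{p≥2} (∏_{h<p} a_{i_hj_h}) c_{i_pj_p}`. -/
def xL (a c : Alph m n → ℝ) : List (Alph m n) → ℝ
  | [] => 0
  | g :: w => c g + a g * xL a c w

/-- `B_{L,σ} = d_{j_1} + Σ_{p≥2} (∏_{h<p} b_{j_h}) d_{j_p}`. -/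
def yL (b d : Fin m → ℝ) : List (Fin m) → ℝ
  | [] => 0
  | j :: τ => d j + b j * yL b d τ

/-- the approximate square `F_σ = [A_{L,σ}, A_{L,σ}+a_{σ_L}] × [B_{L,σ}, B_{L,σ}+b_{σ_y}]`. -/
def Fsq (a c : Alph m n → ℝ) (b d : Fin m → ℝ) (σ : Wd m n) : Set (ℝ × ℝ) :=
  Set.Icc (xL a c σ.1) (xL a c σ.1 + aP a σ.1) ×ˢ
    Set.Icc (yL b d (sy σ)) (yL b d (sy σ) + bP b (sy σ))

/-- the Euclidean distance on `ℝ²`. -/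
def eudist (x y : ℝ × ℝ) : ℝ := Real.sqrt ((x.1 - y.1) ^ 2 + (x.2 - y.2) ^ 2)

/-- the horizontal distance `d_h(S,T) = inf{|x-x'| : (x,y)∈S, (x',y')∈T}`. -/
def dH (S T : Set (ℝ × ℝ)) : ℝ := sInf {e | ∃ x ∈ S, ∃ y ∈ T, e = |x.1 - y.1|}

/-- the (Euclidean) diameter of a subset of `ℝ²`. -/
def euDiam (S : Set (ℝ × ℝ)) : ℝ := sSup {e | ∃ x ∈ S, ∃ y ∈ S, e = eudist x y}

/-- the `N`-th quantization error of order `r`. -/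
def qerr (μ : Measure (ℝ × ℝ)) (r : ℝ) (N : ℕ) : ℝ :=
  sInf {e : ℝ | ∃ α : Finset (ℝ × ℝ), ∃ hα : α.Nonempty, α.card ≤ N ∧
    e = (∫ x, α.inf' hα (fun y => eudist x y ^ r) ∂μ) ^ (1 / r)}

/-- the topological support of a measure on `ℝ²`. -/
def suppSet (μ : Measure (ℝ × ℝ)) : Set (ℝ × ℝ) :=
  {x | ∀ U : Set (ℝ × ℝ), IsOpen U → x ∈ U → μ U ≠ 0}

/-- the dyadic square `[k 2^{-N}, (k+1) 2^{-N}) × [k' 2^{-N}, (k'+1) 2^{-N})`. -/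
def Dy (N : ℕ) (k : ℤ × ℤ) : Set (ℝ × ℝ) :=
  Set.Ico ((k.1 : ℝ) * (2 : ℝ) ^ (-(N : ℤ))) (((k.1 : ℝ) + 1) * (2 : ℝ) ^ (-(N : ℤ))) ×ˢ
    Set.Ico ((k.2 : ℝ) * (2 : ℝ) ^ (-(N : ℤ))) (((k.2 : ℝ) + 1) * (2 : ℝ) ^ (-(N : ℤ)))

/-!
A pair `σ = (w, τ)` lies in `Ψ_k` iff `|w| = k` and `τ` is a cut of `x_w := a_w / b_{w_y}`, that
is `b_τ < x_w ≤ b_{τ⁻}`. If `Σ_j v_j b_j^β = 1`, the products `(v b^β)_τ` over the cuts of any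
`x ∈ (0, 1]` sum to one (a stopping-time identity), and `b_τ ≍ x` on cuts. With `v = q^t` and `β`
chosen so that `Σ_j q_j^t b_j^β = 1` this gives `Σ_τ q_τ^t ≍ x^{-β}`; summing over the words `w`
gives `I_{k,r}(t) ≍ K^k` with `K = Σ_g p_g^t a_g^{rt-β} b_{j(g)}^β`. So `g_r(t) = log K` exists,
and where `g_r` vanishes the `I_{k,r}(t)` are bounded above and below uniformly in `k`.

Every `E_r(σ)` with `σ ∈ Ψ_k` lies in `[δ^k, ε^k]` for some `0 < δ` and `ε < 1`, so `g_r` is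
strictly decreasing and Lipschitz. At `t = 0` the condition on `β` forces `β > 0` (as `m ≥ 2`),
whence `g_r(0) > 0`; at `t = 1` it holds with `β = 0`, whence `g_r(1) = log Σ_g p_g a_g^r < 0`.
The unique zero `t_r ∈ (0, 1)` of `g_r` gives `s_r = r t_r / (1 - t_r)`.
-/

section RealAnalysis

lemma prod_map_pos {ι : Type*} {l : List ι} {f : ι → ℝ} (hf : ∀ i, 0 < f i) :
    0 < (l.map f).prod :=
  List.prod_pos fun _ hx => by obtain ⟨i, -, rfl⟩ := List.mem_map.1 hx; exact hf i

lemma prod_map_nonneg {ι : Type*} {l : List ι} {f : ι → ℝ} (hf : ∀ i, 0 ≤ f i) :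
    0 ≤ (l.map f).prod :=
  List.prod_nonneg fun _ hx => by obtain ⟨i, -, rfl⟩ := List.mem_map.1 hx; exact hf i

lemma sum_prod_map_ofFn {ι : Type*} [Fintype ι] (f : ι → ℝ) (k : ℕ) :
    ∑ u : Fin k → ι, ((List.ofFn u).map f).prod = (∑ i, f i) ^ k := by
  simp [Fintype.sum_pow, List.map_ofFn, List.prod_ofFn]

lemma prod_map_le_pow_length {ι : Type*} {l : List ι} {f : ι → ℝ} {B : ℝ} (h₀ : ∀ i, 0 ≤ f i)
    (hB : ∀ i, f i ≤ B) : (l.map f).prod ≤ B ^ l.length := by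
  simpa using List.prod_map_le_prod_map₀ f (fun _ => B) (fun i _ => h₀ i) fun i _ => hB i

lemma pow_length_le_prod_map {ι : Type*} {l : List ι} {f : ι → ℝ} {c : ℝ} (hc : 0 ≤ c)
    (h : ∀ i, c ≤ f i) : c ^ l.length ≤ (l.map f).prod := by
  simpa using List.prod_map_le_prod_map₀ (fun _ => c) f (fun _ _ => hc) fun i _ => h i

lemma rpow_mem_uIcc_of_mem_Icc {y₀ y₁ y : ℝ} (h₀ : 0 < y₀) (hy : y ∈ Set.Icc y₀ y₁) (γ : ℝ) :
    y ^ γ ∈ Set.uIcc (y₀ ^ γ) (y₁ ^ γ) := by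
  have hy₀ : 0 < y := h₀.trans_le hy.1
  rcases le_total 0 γ with hγ | hγ
  · exact Set.mem_uIcc.2 <| Or.inl
      ⟨Real.rpow_le_rpow h₀.le hy.1 hγ, Real.rpow_le_rpow hy₀.le hy.2 hγ⟩
  · exact Set.mem_uIcc.2 <| Or.inr
      ⟨Real.rpow_le_rpow_of_nonpos hy₀ hy.2 hγ, Real.rpow_le_rpow_of_nonpos h₀ hy.1 hγ⟩

lemma mul_mem_Icc_of_mem_uIcc {F X L S : ℝ} (hF : 0 ≤ F) (hX : 0 ≤ X)
    (hS : S ∈ Set.uIcc (X * L) X) : F * S ∈ Set.Icc (min 1 L * (F * X)) (max 1 L * (F * X)) := by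
  have key : min 1 L * X ≤ S ∧ S ≤ max 1 L * X := by
    rw [min_mul_of_nonneg _ _ hX, max_mul_of_nonneg _ _ hX, one_mul, mul_comm L X]
    rcases Set.mem_uIcc.1 hS with h | h
    exacts [⟨min_le_of_right_le h.1, le_max_of_le_left h.2⟩,
      ⟨min_le_of_left_le h.1, le_max_of_le_right h.2⟩]
  rw [mul_left_comm _ F, mul_left_comm _ F]
  exact ⟨mul_le_mul_of_nonneg_left key.1 hF, mul_le_mul_of_nonneg_left key.2 hF⟩

lemma rpow_mul_rpow_div_rpow {P A B : ℝ} (hP : 0 ≤ P) (hA : 0 < A) (hB : 0 ≤ B) (r t β : ℝ) :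
    (P * A ^ r) ^ t * (A / B) ^ (-β) = P ^ t * A ^ (r * t - β) * B ^ β := by
  rw [Real.mul_rpow hP (Real.rpow_nonneg hA.le r), ← Real.rpow_mul hA.le, Real.div_rpow hA.le hB,
    Real.rpow_neg hB, div_inv_eq_mul, sub_eq_add_neg, Real.rpow_add hA]
  ring

lemma log_mul_pow_div {c K : ℝ} (hc : 0 < c) (hK : 0 < K) {k : ℕ} (hk : k ≠ 0) :
    Real.log (c * K ^ k) / k = Real.log c / k + Real.log K := by
  rw [Real.log_mul hc.ne' (pow_pos hK k).ne', Real.log_pow]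
  field_simp

lemma tendsto_log_div_of_mul_pow_le {f : ℕ → ℝ} {c C K : ℝ} (hc : 0 < c) (hK : 0 < K)
    (hf : ∀ k, 1 ≤ k → c * K ^ k ≤ f k ∧ f k ≤ C * K ^ k) :
    Tendsto (fun k : ℕ => Real.log (f k) / k) atTop (𝓝 (Real.log K)) := by
  have hC : 0 < C := pos_of_mul_pos_left ((mul_pos hc (pow_pos hK 1)).trans_le
    ((hf 1 le_rfl).1.trans (hf 1 le_rfl).2)) (pow_pos hK 1).le
  have hlim : ∀ c : ℝ, Tendsto (fun k : ℕ => Real.log c / k + Real.log K) atTop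
      (𝓝 (Real.log K)) := fun c => by
    simpa using (tendsto_const_div_atTop_nhds_zero_nat (Real.log c)).add_const (Real.log K)
  refine tendsto_of_tendsto_of_tendsto_of_le_of_le' (hlim c) (hlim C) ?_ ?_ <;>
    filter_upwards [eventually_ge_atTop 1] with k hk <;>
    have hk0 : (0 : ℝ) < k := by exact_mod_cast hk
  · rw [← log_mul_pow_div hc hK (by omega)]
    gcongr
    exact (hf k hk).1
  · rw [← log_mul_pow_div hC hK (by omega)]
    gcongr
    exacts [(mul_pos hc (pow_pos hK k)).trans_le (hf k hk).1, (hf k hk).2]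

lemma log_div_sub_log_div_mem_Icc {I I' d e s : ℝ} {k : ℕ} (hk : k ≠ 0) (hI : 0 < I)
    (hd : 0 < d) (he : 0 < e) (h : I' ∈ Set.Icc (I * (d ^ k) ^ s) (I * (e ^ k) ^ s)) :
    Real.log I' / k - Real.log I / k ∈ Set.Icc (s * Real.log d) (s * Real.log e) := by
  have key : ∀ c : ℝ, 0 < c → Real.log (I * (c ^ k) ^ s) / k - Real.log I / k = s * Real.log c :=
    fun c hc => by
      rw [Real.log_mul hI.ne' (by positivity), Real.log_rpow (by positivity), Real.log_pow]
      field_simp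
      ring
  have hlow : 0 < I * (d ^ k) ^ s := by positivity
  rw [← key d hd, ← key e he]
  exact ⟨sub_le_sub_right (div_le_div_of_nonneg_right (Real.log_le_log hlow h.1) k.cast_nonneg) _,
    sub_le_sub_right (div_le_div_of_nonneg_right (Real.log_le_log (hlow.trans_le h.1) h.2)
      k.cast_nonneg) _⟩

lemma exists_div_le_and_le_mul_of_bounds {f : ℕ → ℝ} {c C : ℝ} (hc : 0 < c)
    (hf : ∀ k, 1 ≤ k → c ≤ f k ∧ f k ≤ C) :
    ∃ D : ℝ, 1 ≤ D ∧ ∀ k l, 1 ≤ k → 1 ≤ l → f k / D ≤ f l ∧ f l ≤ D * f k := by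
  have hcC : c ≤ C := (hf 1 le_rfl).1.trans (hf 1 le_rfl).2
  refine ⟨C / c, (one_le_div hc).2 hcC, fun k l hk hl => ⟨?_, ?_⟩⟩
  · rw [div_div_eq_mul_div, div_le_iff₀ (hc.trans_le hcC)]
    nlinarith [hf k hk, hf l hl]
  · rw [div_mul_eq_mul_div, le_div_iff₀ hc]
    nlinarith [hf k hk, hf l hl]

lemma sum_rpow_mul_rpow_le {ι : Type*} (s : Finset ι) {x : ι → ℝ} {d e : ℝ} (hd : 0 < d)
    (hx : ∀ i ∈ s, x i ∈ Set.Icc d e) {t t' : ℝ} (htt' : t ≤ t') :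
    (∑ i ∈ s, x i ^ t) * d ^ (t' - t) ≤ ∑ i ∈ s, x i ^ t' ∧
      ∑ i ∈ s, x i ^ t' ≤ (∑ i ∈ s, x i ^ t) * e ^ (t' - t) := by
  have hsplit : ∀ i ∈ s, x i ^ t' = x i ^ t * x i ^ (t' - t) := fun i hi => by
    rw [← Real.rpow_add (hd.trans_le (hx i hi).1)]; ring_nf
  rw [Finset.sum_congr rfl hsplit, Finset.sum_mul, Finset.sum_mul]
  constructor <;> refine Finset.sum_le_sum fun i hi => ?_ <;>
    have hxi := hd.trans_le (hx i hi).1 <;> gcongr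
  exacts [(hx i hi).1, (hx i hi).2]

lemma exists_sum_mul_rpow_eq_one {ι : Type*} [Fintype ι] [Nonempty ι] {w b : ι → ℝ}
    (hw : ∀ i, 0 < w i) (hb : ∀ i, 0 < b i ∧ b i < 1) : ∃ β : ℝ, ∑ i, w i * b i ^ β = 1 := by
  set f : ℝ → ℝ := fun β => ∑ i, w i * b i ^ β
  have hf : Continuous f := continuous_finsetSum _ fun i _ =>
    continuous_const.mul (continuous_const.rpow continuous_id fun _ => Or.inl (hb i).1.ne')
  obtain ⟨i₀⟩ := ‹Nonempty ι›
  have hbot : Tendsto f atBot atTop := by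
    refine tendsto_atTop_mono (fun β => ?_)
      ((tendsto_rpow_atBot_of_base_lt_one _ (hb i₀).1 (hb i₀).2).const_mul_atTop (hw i₀))
    exact Finset.single_le_sum (f := fun i => w i * b i ^ β)
      (fun i _ => mul_nonneg (hw i).le (Real.rpow_nonneg (hb i).1.le β)) (Finset.mem_univ i₀)
  have htop : Tendsto f atTop (𝓝 0) := by
    simpa using tendsto_finsetSum Finset.univ fun i _ =>
      ((tendsto_rpow_atTop_of_base_lt_one _ (by linarith [(hb i).1]) (hb i).2).const_mul (w i))
  obtain ⟨β₁, hβ₁⟩ := (hbot.eventually_ge_atTop 1).exists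
  obtain ⟨β₂, hβ₂⟩ := (htop.eventually (gt_mem_nhds one_pos)).exists
  exact intermediate_value_univ β₂ β₁ hf ⟨hβ₂.le, hβ₁⟩

end RealAnalysis

section Cut

variable {ι : Type*}

def IsCut (b : ι → ℝ) (x : ℝ) (τ : List ι) : Prop :=
  τ ≠ [] ∧ (τ.map b).prod < x ∧ x ≤ (τ.dropLast.map b).prod

def consEmbedding : (Σ _ : ι, List ι) ↪ List ι where
  toFun σ := σ.1 :: σ.2
  inj' := by
    rintro ⟨j, τ⟩ ⟨j', τ'⟩ h
    obtain ⟨rfl, rfl⟩ := List.cons.inj h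
    rfl

@[simp]
lemma consEmbedding_apply (σ : Σ _ : ι, List ι) : consEmbedding σ = σ.1 :: σ.2 := rfl

def cutFinset [Fintype ι] (b : ι → ℝ) : ℕ → ℝ → Finset (List ι)
  | 0, _ => ∅
  | N + 1, x => (Finset.univ.sigma fun j =>
      if b j < x then {[]} else cutFinset b N (x / b j)).map consEmbedding

variable {b : ι → ℝ} {x : ℝ} {τ : List ι}

lemma IsCut.ne_nil (h : IsCut b x τ) : τ ≠ [] := h.1

lemma IsCut.le_one (h : IsCut b x τ) (hb : ∀ j, 0 ≤ b j ∧ b j ≤ 1) : x ≤ 1 :=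
  h.2.2.trans <| (prod_map_le_pow_length (fun j => (hb j).1) fun j => (hb j).2).trans
    (one_pow _).le

lemma isCut_cons {j : ι} (hbj : 0 < b j) :
    IsCut b x (j :: τ) ↔ (τ = [] ∧ b j < x ∧ x ≤ 1) ∨ IsCut b (x / b j) τ := by
  rcases eq_or_ne τ [] with rfl | hτ
  · simp [IsCut]
  · simp only [IsCut, ne_eq, reduceCtorEq, not_false_eq_true, true_and, hτ, false_and,
      false_or, List.dropLast_cons_of_ne_nil hτ, List.map_cons, List.prod_cons,
      lt_div_iff₀ hbj, div_le_iff₀ hbj, mul_comm (b j)]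

lemma IsCut.prod_mem_Icc (h : IsCut b x τ) {l : ℝ} (hl : 0 ≤ l) (hb : ∀ j, l ≤ b j) :
    (τ.map b).prod ∈ Set.Icc (x * l) x := by
  refine ⟨?_, h.2.1.le⟩
  rw [← List.dropLast_append_getLast h.ne_nil, List.map_append, List.prod_append]
  simpa using mul_le_mul h.2.2 (hb _) hl (prod_map_nonneg fun j => hl.trans (hb j))

lemma IsCut.length_le (h : IsCut b x τ) {B : ℝ} (hb : ∀ j, 0 ≤ b j ∧ b j ≤ B) (hB : B < 1)
    {N : ℕ} (hN : B ^ N < x) : τ.length ≤ N := by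
  obtain ⟨j, hj⟩ := List.exists_mem_of_ne_nil τ h.ne_nil
  have hB0 : 0 ≤ B := (hb j).1.trans (hb j).2
  by_contra! hlt
  have hprod : (τ.dropLast.map b).prod ≤ B ^ τ.dropLast.length :=
    prod_map_le_pow_length (fun j => (hb j).1) fun j => (hb j).2
  have hpow : B ^ τ.dropLast.length ≤ B ^ N :=
    pow_le_pow_of_le_one hB0 hB.le (by rw [List.length_dropLast]; omega)
  linarith [h.2.2]

variable [Fintype ι]

lemma nil_notMem_cutFinset (N : ℕ) (x : ℝ) : [] ∉ cutFinset b N x := by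
  cases N <;> simp [cutFinset, consEmbedding]

lemma cons_mem_cutFinset_succ {N : ℕ} {j : ι} :
    j :: τ ∈ cutFinset b (N + 1) x ↔
      τ ∈ (if b j < x then {[]} else cutFinset b N (x / b j)) := by
  change consEmbedding ⟨j, τ⟩ ∈ _ ↔ _
  rw [cutFinset, Finset.mem_map', Finset.mem_sigma]
  simp

lemma mem_cutFinset_iff (hb : ∀ j, 0 < b j ∧ b j ≤ 1) {N : ℕ} (hx : x ≤ 1) :
    τ ∈ cutFinset b N x ↔ IsCut b x τ ∧ τ.length ≤ N := by
  have hb' : ∀ j, 0 ≤ b j ∧ b j ≤ 1 := fun j => ⟨(hb j).1.le, (hb j).2⟩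
  induction N generalizing x τ with
  | zero =>
    cases τ <;> simp [cutFinset, IsCut]
  | succ N ih =>
    rcases τ with _ | ⟨j, τ⟩
    · simp [nil_notMem_cutFinset, IsCut]
    rw [cons_mem_cutFinset_succ, isCut_cons (hb j).1, List.length_cons,
      Nat.add_le_add_iff_right]
    split_ifs with hj
    · have hτ : ¬ IsCut b (x / b j) τ := fun hc =>
        absurd ((div_le_one (hb j).1).1 (hc.le_one hb')) (not_le.2 hj)
      simp only [Finset.mem_singleton, hτ, or_false]
      constructor
      · rintro rfl; exact ⟨⟨rfl, hj, hx⟩, Nat.zero_le N⟩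
      · exact fun h => h.1.1
    · refine (ih ((div_le_one (hb j).1).2 (not_lt.1 hj))).trans ?_
      simp [hj]

lemma sum_cutFinset_prod_eq_one {B : ℝ} (hb : ∀ j, 0 < b j ∧ b j ≤ B) {w : ι → ℝ}
    (hw : ∑ j, w j = 1) {N : ℕ} (hx : x ≤ 1) (hN : B ^ N < x) :
    ∑ τ ∈ cutFinset b N x, (τ.map w).prod = 1 := by
  induction N generalizing x with
  | zero => exact absurd (hN.trans_le hx) (by simp)
  | succ N ih =>
    rw [cutFinset, Finset.sum_map, Finset.sum_sigma, ← hw]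
    refine Finset.sum_congr rfl fun j _ => ?_
    have hbj := (hb j).1
    simp only [consEmbedding_apply, List.map_cons, List.prod_cons]
    split_ifs with hj
    · simp
    · have hB : 0 < B := hbj.trans_le (hb j).2
      have hN' : B ^ N < x / b j := by
        have hxB : B ^ N < x / B := by rwa [lt_div_iff₀ hB, ← pow_succ]
        exact hxB.trans_le <|
          div_le_div_of_nonneg_left ((pow_pos hB _).trans hN).le hbj (hb j).2
      rw [← Finset.mul_sum, ih ((div_le_one hbj).2 (not_lt.1 hj)) hN', mul_one]

lemma sum_cutFinset_prod_mem_uIcc {B l : ℝ} (hb : ∀ j, 0 < b j ∧ b j ≤ 1)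
    (hbB : ∀ j, b j ≤ B) (hl : 0 < l) (hbl : ∀ j, l ≤ b j) {v : ι → ℝ} (hv : ∀ j, 0 ≤ v j)
    {β : ℝ} (hβ : ∑ j, v j * b j ^ β = 1) {N : ℕ} (hx : x ≤ 1) (hN : B ^ N < x) :
    ∑ τ ∈ cutFinset b N x, (τ.map v).prod ∈ Set.uIcc ((x * l) ^ (-β)) (x ^ (-β)) := by
  -- `v_τ = (v b^β)_τ · b_τ^{-β}`, and the weights `(v b^β)_τ` of the cuts sum to one
  have hsplit : ∀ τ : List ι, (τ.map v).prod =
      (τ.map fun j => v j * b j ^ β).prod * (τ.map b).prod ^ (-β) := fun τ => by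
    have hτ : 0 < (τ.map b).prod := prod_map_pos fun j => (hb j).1
    rw [List.prod_map_mul, Real.list_prod_map_rpow' _ _ (fun j _ => (hb j).1.le), mul_assoc,
      ← Real.rpow_add hτ, add_neg_cancel, Real.rpow_zero, mul_one]
  rw [Finset.sum_congr rfl fun τ _ => hsplit τ]
  refine (convex_uIcc _ _).sum_mem (fun τ _ => List.prod_nonneg fun _ hy => ?_)
    (sum_cutFinset_prod_eq_one (fun j => ⟨(hb j).1, hbB j⟩) hβ hx hN) fun τ hτ => ?_
  · obtain ⟨j, -, rfl⟩ := List.mem_map.1 hy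
    exact mul_nonneg (hv j) (Real.rpow_nonneg (hb j).1.le β)
  · have hcut := ((mem_cutFinset_iff hb hx).1 hτ).1
    have hx0 : 0 < x := (prod_map_pos fun j => (hb j).1).trans hcut.2.1
    exact rpow_mem_uIcc_of_mem_Icc (mul_pos hx0 hl) (hcut.prod_mem_Icc hl.le hbl) (-β)

end Cut

section Constants

variable {a p : Alph m n → ℝ} {b : Fin m → ℝ}

lemma aLo_le (a : Alph m n → ℝ) (g : Alph m n) : aLo a ≤ a g :=
  ciInf_le (Set.finite_range a).bddBelow g

lemma le_aHi (a : Alph m n → ℝ) (g : Alph m n) : a g ≤ aHi a :=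
  le_ciSup (Set.finite_range a).bddAbove g

lemma bLo_le (b : Fin m → ℝ) (j : Fin m) : bLo b ≤ b j :=
  ciInf_le (Set.finite_range b).bddBelow j

lemma le_bHi (b : Fin m → ℝ) (j : Fin m) : b j ≤ bHi b :=
  le_ciSup (Set.finite_range b).bddAbove j

lemma pLo_le (p : Alph m n → ℝ) (g : Alph m n) : pLo p ≤ p g :=
  ciInf_le (Set.finite_range p).bddBelow g

lemma qLo_le (p : Alph m n → ℝ) (j : Fin m) : qLo p ≤ qf p j :=
  ciInf_le (Set.finite_range (qf p)).bddBelow j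

lemma sum_qf (p : Alph m n → ℝ) : ∑ j, qf p j = ∑ g, p g :=
  (Fintype.sum_sigma _).symm

lemma le_one_of_sum_eq_one {ι : Type*} [Fintype ι] {f : ι → ℝ} (hf : ∀ i, 0 ≤ f i)
    (hf1 : ∑ i, f i = 1) (i : ι) : f i ≤ 1 :=
  hf1 ▸ Finset.single_le_sum (fun i _ => hf i) (Finset.mem_univ i)

lemma qf_pos [∀ j, NeZero (n j)] (hp : ∀ g, 0 < p g) (j : Fin m) : 0 < qf p j :=
  Finset.sum_pos (fun _ _ => hp _) Finset.univ_nonempty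

variable [NeZero m] [∀ j, NeZero (n j)]

lemma aLo_pos (ha : ∀ g, 0 < a g) : 0 < aLo a := by
  obtain ⟨g, hg⟩ := exists_eq_ciInf_of_finite (f := a)
  rw [aLo, ← hg]
  exact ha g

lemma aHi_pos (ha : ∀ g, 0 < a g) : 0 < aHi a :=
  (ha _).trans_le (le_aHi a (Classical.arbitrary _))

lemma aHi_lt_one (ha : ∀ g, a g < 1) : aHi a < 1 := by
  obtain ⟨g, hg⟩ := exists_eq_ciSup_of_finite (f := a)
  rw [aHi, ← hg]
  exact ha g

lemma bLo_pos (hb : ∀ j, 0 < b j) : 0 < bLo b := by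
  obtain ⟨j, hj⟩ := exists_eq_ciInf_of_finite (f := b)
  rw [bLo, ← hj]
  exact hb j

lemma bHi_lt_one (hb : ∀ j, b j < 1) : bHi b < 1 := by
  obtain ⟨j, hj⟩ := exists_eq_ciSup_of_finite (f := b)
  rw [bHi, ← hj]
  exact hb j

lemma pLo_pos (hp : ∀ g, 0 < p g) : 0 < pLo p := by
  obtain ⟨g, hg⟩ := exists_eq_ciInf_of_finite (f := p)
  rw [pLo, ← hg]
  exact hp g

lemma qLo_pos (hp : ∀ g, 0 < p g) : 0 < qLo p := by
  obtain ⟨j, hj⟩ := exists_eq_ciInf_of_finite (f := qf p)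
  rw [qLo, ← hj]
  exact qf_pos hp j

end Constants

section Psi

variable {a : Alph m n → ℝ} {b : Fin m → ℝ}

def scale (a : Alph m n → ℝ) (b : Fin m → ℝ) (w : List (Alph m n)) : ℝ :=
  aP a w / bP b (w.map Sigma.fst)

lemma bP_map_fst (b : Fin m → ℝ) (w : List (Alph m n)) :
    bP b (w.map Sigma.fst) = (w.map fun g => b g.1).prod := by
  rw [bP, List.map_map]; rfl

lemma bP_pos (hb : ∀ j, 0 < b j) (τ : List (Fin m)) : 0 < bP b τ :=
  prod_map_pos hb

lemma scale_pos (ha : ∀ g, 0 < a g) (hb : ∀ j, 0 < b j) (w : List (Alph m n)) :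
    0 < scale a b w :=
  div_pos (prod_map_pos ha) (bP_pos hb _)

lemma scale_le_one (ha : ∀ g, 0 < a g ∧ a g < b g.1) (hb : ∀ j, 0 < b j)
    (w : List (Alph m n)) : scale a b w ≤ 1 := by
  rw [scale, div_le_one (bP_pos hb _), bP_map_fst]
  exact List.prod_map_le_prod_map₀ _ _ (fun g _ => (ha g).1.le) fun g _ => (ha g).2.le

lemma mk_mem_Psi_iff (hb : ∀ j, 0 < b j) {k : ℕ} {w : List (Alph m n)} {τ : List (Fin m)} :
    (w, τ) ∈ Psi a b k ↔ w.length = k ∧ IsCut b (scale a b w) τ := by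
  have hbw := bP_pos hb (w.map Sigma.fst)
  rcases eq_or_ne τ [] with rfl | hτ
  · simp [Psi, IsCut]
  · have hsplit : ∀ l, bP b (w.map Sigma.fst ++ l) = bP b (w.map Sigma.fst) * (l.map b).prod :=
      fun l => by simp [bP]
    have hlen : 1 ≤ τ.length := List.length_pos_iff.2 hτ
    simp only [Psi, sy, IsCut, Set.mem_ofPred_eq, hlen, hτ, ne_eq,
      not_false_eq_true, true_and, List.dropLast_append_of_ne_nil hτ, hsplit, scale,
      lt_div_iff₀ hbw, div_le_iff₀ hbw, mul_comm (bP b _)]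
    tauto

lemma exists_pow_mul_length_lt_scale [NeZero m] [∀ j, NeZero (n j)]
    (ha : ∀ g, 0 < a g ∧ a g < b g.1) (hb : ∀ j, 0 < b j ∧ b j < 1) :
    ∃ M : ℕ, ∀ w : List (Alph m n), w ≠ [] → bHi b ^ (M * w.length) < scale a b w := by
  have hB := bHi_lt_one fun j => (hb j).2
  have hB0 : 0 ≤ bHi b := (hb 0).1.le.trans (le_bHi b 0)
  obtain ⟨M, hM⟩ := exists_pow_lt_of_lt_one (aLo_pos fun g => (ha g).1) hB
  refine ⟨M, fun w hw => ?_⟩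
  have hbw := bP_pos (fun j => (hb j).1) (w.map Sigma.fst)
  calc bHi b ^ (M * w.length) = (bHi b ^ M) ^ w.length := pow_mul _ _ _
    _ < aLo a ^ w.length := pow_lt_pow_left₀ hM (pow_nonneg hB0 M) (by simpa using hw)
    _ ≤ aP a w := pow_length_le_prod_map (aLo_pos fun g => (ha g).1).le (aLo_le a)
    _ ≤ scale a b w := le_div_self (prod_map_pos fun g => (ha g).1).le hbw <|
          (prod_map_le_pow_length (l := w.map Sigma.fst) (fun j => (hb j).1.le)
            fun j => (hb j).2.le).trans_eq (one_pow _)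

def wordEmbedding (k : ℕ) : (Σ _ : Fin k → Alph m n, List (Fin m)) ↪ Wd m n where
  toFun σ := (List.ofFn σ.1, σ.2)
  inj' := by
    rintro ⟨u, τ⟩ ⟨u', τ'⟩ h
    obtain ⟨hu, rfl⟩ := Prod.mk.inj h
    obtain rfl := List.ofFn_injective hu
    rfl

@[simp]
lemma wordEmbedding_apply {k : ℕ} (σ : Σ _ : Fin k → Alph m n, List (Fin m)) :
    wordEmbedding k σ = (List.ofFn σ.1, σ.2) := rfl

def psiFinset (a : Alph m n → ℝ) (b : Fin m → ℝ) (N k : ℕ) : Finset (Wd m n) :=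
  (Finset.univ.sigma fun u : Fin k → Alph m n =>
    cutFinset b N (scale a b (List.ofFn u))).map (wordEmbedding k)

variable {N k : ℕ}

lemma coe_psiFinset [NeZero m] [∀ j, NeZero (n j)] (ha : ∀ g, 0 < a g ∧ a g < b g.1)
    (hb : ∀ j, 0 < b j ∧ b j < 1)
    (hN : ∀ w : List (Alph m n), w.length = k → bHi b ^ N < scale a b w) :
    (psiFinset a b N k : Set (Wd m n)) = Psi a b k := by
  have hb' : ∀ j, 0 < b j ∧ b j ≤ 1 := fun j => ⟨(hb j).1, (hb j).2.le⟩
  have hmem : ∀ w : List (Alph m n), w.length = k → ∀ τ,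
      τ ∈ cutFinset b N (scale a b w) ↔ IsCut b (scale a b w) τ := fun w hw τ => by
    rw [mem_cutFinset_iff hb' (scale_le_one ha (fun j => (hb j).1) w), and_iff_left_iff_imp]
    exact fun hc => hc.length_le (fun j => ⟨(hb j).1.le, le_bHi b j⟩)
      (bHi_lt_one fun j => (hb j).2) (hN w hw)
  ext ⟨w, τ⟩
  simp only [psiFinset, Finset.coe_map, Set.mem_image, Finset.mem_coe, Finset.mem_sigma,
    Finset.mem_univ, true_and, wordEmbedding_apply, Sigma.exists, Prod.mk.injEq,
    mk_mem_Psi_iff fun j => (hb j).1]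
  constructor
  · rintro ⟨u, τ, hτ, rfl, rfl⟩
    exact ⟨List.length_ofFn, (hmem _ List.length_ofFn τ).1 hτ⟩
  · rintro ⟨rfl, hτ⟩
    exact ⟨w.get, τ, by rwa [List.ofFn_get, hmem w rfl], List.ofFn_get w, rfl⟩

lemma Ih_eq_sum_psiFinset [NeZero m] [∀ j, NeZero (n j)] (ha : ∀ g, 0 < a g ∧ a g < b g.1)
    (hb : ∀ j, 0 < b j ∧ b j < 1)
    (hN : ∀ w : List (Alph m n), w.length = k → bHi b ^ N < scale a b w)
    (p : Alph m n → ℝ) (r t : ℝ) :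
    Ih a b p r k t = ∑ σ ∈ psiFinset a b N k, Er a p r σ ^ t := by
  rw [Ih, ← coe_psiFinset ha hb hN]
  exact Finset.tsum_subtype' _ fun σ => Er a p r σ ^ t

end Psi

section EnergyBounds

variable {a p : Alph m n → ℝ} {b : Fin m → ℝ} {r : ℝ}

lemma Er_mem_Icc [NeZero m] [∀ j, NeZero (n j)] (ha : ∀ g, 0 < a g)
    (hb : ∀ j, 0 < b j ∧ b j < 1) (hp : ∀ g, 0 < p g) (hp1 : ∑ g, p g = 1) (hr : 0 ≤ r)
    {M : ℕ} (hM : ∀ w : List (Alph m n), w ≠ [] → bHi b ^ (M * w.length) < scale a b w)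
    {k : ℕ} (hk : 1 ≤ k) {σ : Wd m n} (hσ : σ ∈ Psi a b k) :
    Er a p r σ ∈ Set.Icc ((pLo p * qLo p ^ M * aLo a ^ r) ^ k) ((aHi a ^ r) ^ k) := by
  obtain ⟨w, τ⟩ := σ
  obtain ⟨rfl, hτ⟩ := (mk_mem_Psi_iff fun j => (hb j).1).1 hσ
  have hlen : τ.length ≤ M * w.length :=
    hτ.length_le (fun j => ⟨(hb j).1.le, le_bHi b j⟩) (bHi_lt_one fun j => (hb j).2)
      (hM w (List.ne_nil_of_length_pos hk))
  have hq1 : ∀ j, qf p j ≤ 1 :=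
    le_one_of_sum_eq_one (fun j => (qf_pos hp j).le) (by rw [sum_qf, hp1])
  have haLo := aLo_pos ha
  have hpP : 0 < pP p w := prod_map_pos hp
  have hqP : 0 < qP p τ := prod_map_pos (qf_pos hp)
  have haP : 0 < aP a w := prod_map_pos ha
  constructor
  · calc (pLo p * qLo p ^ M * aLo a ^ r) ^ w.length
          = pLo p ^ w.length * qLo p ^ (M * w.length) * (aLo a ^ w.length) ^ r := by
          rw [mul_pow, mul_pow, ← pow_mul, Real.rpow_pow_comm haLo.le]
      _ ≤ pP p w * qP p τ * aP a w ^ r := by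
        refine mul_le_mul (mul_le_mul ?_ ?_ (pow_nonneg (qLo_pos hp).le _) hpP.le) ?_
          (by positivity) (mul_pos hpP hqP).le
        · exact pow_length_le_prod_map (pLo_pos hp).le (pLo_le p)
        · exact (pow_le_pow_of_le_one (qLo_pos hp).le ((qLo_le p 0).trans (hq1 0)) hlen).trans
            (pow_length_le_prod_map (qLo_pos hp).le (qLo_le p))
        · exact Real.rpow_le_rpow (by positivity) (pow_length_le_prod_map haLo.le (aLo_le a)) hr
  · calc pP p w * qP p τ * aP a w ^ r ≤ 1 * 1 * (aHi a ^ w.length) ^ r := by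
          refine mul_le_mul (mul_le_mul ?_ ?_ hqP.le zero_le_one) ?_ (by positivity)
            (by norm_num)
          · exact (prod_map_le_pow_length (fun g => (hp g).le)
              (le_one_of_sum_eq_one (fun g => (hp g).le) hp1)).trans_eq (one_pow _)
          · exact (prod_map_le_pow_length (fun j => (qf_pos hp j).le) hq1).trans_eq (one_pow _)
          · exact Real.rpow_le_rpow haP.le
              (prod_map_le_pow_length (fun g => (ha g).le) (le_aHi a)) hr
      _ = (aHi a ^ r) ^ w.length := by
          rw [one_mul, one_mul, Real.rpow_pow_comm (aHi_pos ha).le]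

lemma exists_Ih_rpow_bounds [NeZero m] [∀ j, NeZero (n j)] (ha : ∀ g, 0 < a g ∧ a g < b g.1)
    (hb : ∀ j, 0 < b j ∧ b j < 1) (hp : ∀ g, 0 < p g) (hp1 : ∑ g, p g = 1) (hr : 0 < r) :
    ∃ δ ε : ℝ, 0 < δ ∧ 0 < ε ∧ ε < 1 ∧ ∀ k, 1 ≤ k → ∀ t t' : ℝ, t ≤ t' →
      Ih a b p r k t' ∈
        Set.Icc (Ih a b p r k t * (δ ^ k) ^ (t' - t)) (Ih a b p r k t * (ε ^ k) ^ (t' - t)) := by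
  obtain ⟨M, hM⟩ := exists_pow_mul_length_lt_scale ha hb
  have haHi := aHi_pos fun g => (ha g).1
  have hδ : 0 < pLo p * qLo p ^ M * aLo a ^ r := by
    have := pLo_pos hp; have := qLo_pos hp; have := aLo_pos fun g => (ha g).1
    positivity
  refine ⟨_, aHi a ^ r, hδ, by positivity,
    Real.rpow_lt_one haHi.le (aHi_lt_one fun g => (ha g).2.trans (hb g.1).2) hr,
    fun k hk t t' htt' => ?_⟩
  have hN : ∀ w : List (Alph m n), w.length = k → bHi b ^ (M * k) < scale a b w :=
    fun w hw => hw ▸ hM w (List.ne_nil_of_length_pos (hw ▸ hk))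
  rw [Ih_eq_sum_psiFinset ha hb hN, Ih_eq_sum_psiFinset ha hb hN]
  refine sum_rpow_mul_rpow_le _ (pow_pos hδ k) (fun σ hσ => ?_) htt'
  rw [← Finset.mem_coe, coe_psiFinset ha hb hN] at hσ
  exact Er_mem_Icc (fun g => (ha g).1) hb hp hp1 hr.le hM hk hσ

def weightSum (a : Alph m n → ℝ) (b : Fin m → ℝ) (p : Alph m n → ℝ) (r t β : ℝ) : ℝ :=
  ∑ g, p g ^ t * a g ^ (r * t - β) * b g.1 ^ β

lemma weightSum_pos [NeZero m] [∀ j, NeZero (n j)] (ha : ∀ g, 0 < a g) (hb : ∀ j, 0 < b j)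
    (hp : ∀ g, 0 < p g) (r t β : ℝ) : 0 < weightSum a b p r t β :=
  Finset.sum_pos (fun g _ => by have := ha g; have := hb g.1; have := hp g; positivity)
    (Finset.univ_nonempty (α := Alph m n))

lemma Er_rpow (ha : ∀ g, 0 ≤ a g) (hp : ∀ g, 0 ≤ p g) (w : List (Alph m n))
    (τ : List (Fin m)) (t : ℝ) :
    Er a p r (w, τ) ^ t = (pP p w * aP a w ^ r) ^ t * qP p τ ^ t := by
  have hq : ∀ j, 0 ≤ qf p j := fun j => Finset.sum_nonneg fun i _ => hp _
  have hpP : 0 ≤ pP p w := prod_map_nonneg hp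
  have haP : 0 ≤ aP a w := prod_map_nonneg ha
  have hqP : 0 ≤ qP p τ := prod_map_nonneg hq
  rw [Er, mul_right_comm, Real.mul_rpow (by positivity) hqP]

lemma rpow_mul_scale_rpow (ha : ∀ g, 0 < a g) (hb : ∀ j, 0 < b j) (hp : ∀ g, 0 ≤ p g)
    (w : List (Alph m n)) (t β : ℝ) :
    (pP p w * aP a w ^ r) ^ t * scale a b w ^ (-β) =
      (w.map fun g => p g ^ t * a g ^ (r * t - β) * b g.1 ^ β).prod := by
  rw [scale, rpow_mul_rpow_div_rpow (P := pP p w) (A := aP a w) (prod_map_nonneg hp)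
    (prod_map_pos ha) (bP_pos hb _).le, List.prod_map_mul, List.prod_map_mul,
    Real.list_prod_map_rpow' _ _ (fun g _ => hp g), Real.list_prod_map_rpow' _ _
    (fun g _ => (ha g).le), Real.list_prod_map_rpow' _ _ (fun g _ => (hb g.1).le), bP_map_fst]
  rfl

lemma sum_cutFinset_Er_rpow_mem_Icc [NeZero m] [∀ j, NeZero (n j)]
    (ha : ∀ g, 0 < a g ∧ a g < b g.1) (hb : ∀ j, 0 < b j ∧ b j < 1) (hp : ∀ g, 0 < p g)
    {t β : ℝ} (hβ : ∑ j, qf p j ^ t * b j ^ β = 1) {N : ℕ} {w : List (Alph m n)}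
    (hN : bHi b ^ N < scale a b w) :
    ∑ τ ∈ cutFinset b N (scale a b w), Er a p r (w, τ) ^ t ∈
      Set.Icc (min 1 (bLo b ^ (-β)) * (w.map fun g => p g ^ t * a g ^ (r * t - β) * b g.1 ^ β).prod)
        (max 1 (bLo b ^ (-β)) * (w.map fun g => p g ^ t * a g ^ (r * t - β) * b g.1 ^ β).prod) := by
  have hq : ∀ j, 0 ≤ qf p j := fun j => (qf_pos hp j).le
  have hqsum := sum_cutFinset_prod_mem_uIcc (fun j => ⟨(hb j).1, (hb j).2.le⟩) (le_bHi b)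
    (bLo_pos fun j => (hb j).1) (bLo_le b)
    (fun j => Real.rpow_nonneg (hq j) t) hβ (scale_le_one ha (fun j => (hb j).1) w) hN
  rw [Finset.sum_congr rfl fun τ _ => Real.list_prod_map_rpow' τ _ (fun j _ => hq j) t] at hqsum
  rw [Finset.sum_congr rfl fun τ _ => Er_rpow (fun g => (ha g).1.le) (fun g => (hp g).le) w τ t,
    ← Finset.mul_sum, ← rpow_mul_scale_rpow (fun g => (ha g).1) (fun j => (hb j).1)
    (fun g => (hp g).le)]
  rw [Real.mul_rpow (scale_pos (fun g => (ha g).1) (fun j => (hb j).1) w).le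
    (bLo_pos fun j => (hb j).1).le] at hqsum
  exact mul_mem_Icc_of_mem_uIcc (Real.rpow_nonneg (mul_nonneg (prod_map_nonneg fun g => (hp g).le)
    (Real.rpow_nonneg (prod_map_nonneg fun g => (ha g).1.le) r)) t)
    (Real.rpow_nonneg (scale_pos (fun g => (ha g).1) (fun j => (hb j).1) w).le _) hqsum

lemma exists_Ih_bounds [NeZero m] [∀ j, NeZero (n j)] (ha : ∀ g, 0 < a g ∧ a g < b g.1)
    (hb : ∀ j, 0 < b j ∧ b j < 1) (hp : ∀ g, 0 < p g) {t β : ℝ}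
    (hβ : ∑ j, qf p j ^ t * b j ^ β = 1) :
    ∃ c C : ℝ, 0 < c ∧ ∀ k, 1 ≤ k →
      c * weightSum a b p r t β ^ k ≤ Ih a b p r k t ∧
        Ih a b p r k t ≤ C * weightSum a b p r t β ^ k := by
  obtain ⟨M, hM⟩ := exists_pow_mul_length_lt_scale ha hb
  refine ⟨min 1 (bLo b ^ (-β)), max 1 (bLo b ^ (-β)),
    lt_min one_pos (Real.rpow_pos_of_pos (bLo_pos fun j => (hb j).1) (-β)), fun k hk => ?_⟩
  have hN : ∀ w : List (Alph m n), w.length = k → bHi b ^ (M * k) < scale a b w :=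
    fun w hw => hw ▸ hM w (List.ne_nil_of_length_pos (hw ▸ hk))
  rw [Ih_eq_sum_psiFinset ha hb hN, psiFinset, Finset.sum_map, Finset.sum_sigma, weightSum,
    ← sum_prod_map_ofFn, Finset.mul_sum, Finset.mul_sum]
  exact ⟨Finset.sum_le_sum fun u _ => (sum_cutFinset_Er_rpow_mem_Icc ha hb hp hβ
      (hN _ List.length_ofFn)).1,
    Finset.sum_le_sum fun u _ => (sum_cutFinset_Er_rpow_mem_Icc ha hb hp hβ
      (hN _ List.length_ofFn)).2⟩

end EnergyBounds

section GrowthRate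

variable {a p : Alph m n → ℝ} {b : Fin m → ℝ} {r : ℝ}

/-- `g_r(t)`. -/
def growthRate (a : Alph m n → ℝ) (b : Fin m → ℝ) (p : Alph m n → ℝ) (r t : ℝ) : ℝ :=
  limUnder atTop fun k : ℕ => Real.log (Ih a b p r k t) / k

variable [NeZero m] [∀ j, NeZero (n j)]

lemma tendsto_log_Ih_div_weightSum (ha : ∀ g, 0 < a g ∧ a g < b g.1)
    (hb : ∀ j, 0 < b j ∧ b j < 1) (hp : ∀ g, 0 < p g) {t β : ℝ}
    (hβ : ∑ j, qf p j ^ t * b j ^ β = 1) :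
    Tendsto (fun k : ℕ => Real.log (Ih a b p r k t) / k) atTop
      (𝓝 (Real.log (weightSum a b p r t β))) := by
  obtain ⟨c, C, hc, hbounds⟩ := exists_Ih_bounds (r := r) ha hb hp hβ
  exact tendsto_log_div_of_mul_pow_le hc
    (weightSum_pos (fun g => (ha g).1) (fun j => (hb j).1) hp r t β) hbounds

lemma growthRate_eq_log_weightSum (ha : ∀ g, 0 < a g ∧ a g < b g.1)
    (hb : ∀ j, 0 < b j ∧ b j < 1) (hp : ∀ g, 0 < p g) {t β : ℝ}
    (hβ : ∑ j, qf p j ^ t * b j ^ β = 1) :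
    growthRate a b p r t = Real.log (weightSum a b p r t β) :=
  (tendsto_log_Ih_div_weightSum ha hb hp hβ).limUnder_eq

lemma exists_sum_qf_rpow_mul_rpow_eq_one (hb : ∀ j, 0 < b j ∧ b j < 1) (hp : ∀ g, 0 < p g)
    (t : ℝ) : ∃ β : ℝ, ∑ j, qf p j ^ t * b j ^ β = 1 :=
  exists_sum_mul_rpow_eq_one (fun j => Real.rpow_pos_of_pos (qf_pos hp j) t) hb

lemma tendsto_growthRate (ha : ∀ g, 0 < a g ∧ a g < b g.1) (hb : ∀ j, 0 < b j ∧ b j < 1)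
    (hp : ∀ g, 0 < p g) (t : ℝ) :
    Tendsto (fun k : ℕ => Real.log (Ih a b p r k t) / k) atTop (𝓝 (growthRate a b p r t)) := by
  obtain ⟨β, hβ⟩ := exists_sum_qf_rpow_mul_rpow_eq_one hb hp t
  rw [growthRate_eq_log_weightSum ha hb hp hβ]
  exact tendsto_log_Ih_div_weightSum ha hb hp hβ

lemma Ih_pos (ha : ∀ g, 0 < a g ∧ a g < b g.1) (hb : ∀ j, 0 < b j ∧ b j < 1)
    (hp : ∀ g, 0 < p g) {k : ℕ} (hk : 1 ≤ k) (t : ℝ) : 0 < Ih a b p r k t := by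
  obtain ⟨β, hβ⟩ := exists_sum_qf_rpow_mul_rpow_eq_one hb hp t
  obtain ⟨c, C, hc, h⟩ := exists_Ih_bounds (r := r) ha hb hp hβ
  exact (mul_pos hc (pow_pos (weightSum_pos (fun g => (ha g).1) (fun j => (hb j).1) hp r t β)
    k)).trans_le (h k hk).1

lemma exists_growthRate_sub_mem_Icc (ha : ∀ g, 0 < a g ∧ a g < b g.1)
    (hb : ∀ j, 0 < b j ∧ b j < 1) (hp : ∀ g, 0 < p g) (hp1 : ∑ g, p g = 1) (hr : 0 < r) :
    ∃ δ ε : ℝ, 0 < δ ∧ 0 < ε ∧ ε < 1 ∧ ∀ t t' : ℝ, t ≤ t' →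
      growthRate a b p r t' - growthRate a b p r t ∈
        Set.Icc ((t' - t) * Real.log δ) ((t' - t) * Real.log ε) := by
  obtain ⟨δ, ε, hδ, hε, hε1, hI⟩ := exists_Ih_rpow_bounds ha hb hp hp1 hr
  refine ⟨δ, ε, hδ, hε, hε1, fun t t' htt' => ?_⟩
  refine isClosed_Icc.mem_of_tendsto
    ((tendsto_growthRate ha hb hp t').sub (tendsto_growthRate ha hb hp t)) ?_
  filter_upwards [eventually_ge_atTop 1] with k hk
  exact log_div_sub_log_div_mem_Icc (by omega) (Ih_pos ha hb hp hk t) hδ hε (hI k hk t t' htt')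

lemma growthRate_strictAnti (ha : ∀ g, 0 < a g ∧ a g < b g.1) (hb : ∀ j, 0 < b j ∧ b j < 1)
    (hp : ∀ g, 0 < p g) (hp1 : ∑ g, p g = 1) (hr : 0 < r) :
    StrictAnti (growthRate a b p r) := by
  obtain ⟨δ, ε, -, hε, hε1, h⟩ := exists_growthRate_sub_mem_Icc ha hb hp hp1 hr
  intro t t' htt'
  have hneg : (t' - t) * Real.log ε < 0 :=
    mul_neg_of_pos_of_neg (sub_pos.2 htt') (Real.log_neg hε hε1)
  linarith [(h t t' htt'.le).2]

lemma growthRate_continuous (ha : ∀ g, 0 < a g ∧ a g < b g.1) (hb : ∀ j, 0 < b j ∧ b j < 1)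
    (hp : ∀ g, 0 < p g) (hp1 : ∑ g, p g = 1) (hr : 0 < r) :
    Continuous (growthRate a b p r) := by
  obtain ⟨δ, ε, -, hε, hε1, h⟩ := exists_growthRate_sub_mem_Icc ha hb hp hp1 hr
  refine (LipschitzWith.of_dist_le_mul (K := (-Real.log δ).toNNReal) fun t t' => ?_).continuous
  wlog htt' : t ≤ t' generalizing t t'
  · rw [dist_comm, dist_comm t]
    exact this t' t (le_of_not_ge htt')
  obtain ⟨h₁, h₂⟩ := h t t' htt'
  have hε' : (t' - t) * Real.log ε ≤ 0 :=
    mul_nonpos_of_nonneg_of_nonpos (sub_nonneg.2 htt') (Real.log_neg hε hε1).le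
  have hδ' : (t' - t) * -Real.log δ ≤ (t' - t) * max (-Real.log δ) 0 :=
    mul_le_mul_of_nonneg_left (le_max_left _ _) (sub_nonneg.2 htt')
  rw [Real.coe_toNNReal', Real.dist_eq, Real.dist_eq, abs_sub_comm t,
    abs_of_nonneg (sub_nonneg.2 htt'), abs_le]
  constructor <;> nlinarith

lemma growthRate_zero_pos (hm : 2 ≤ m) (ha : ∀ g, 0 < a g ∧ a g < b g.1)
    (hb : ∀ j, 0 < b j ∧ b j < 1) (hp : ∀ g, 0 < p g) : 0 < growthRate a b p r 0 := by
  obtain ⟨β, hβ⟩ := exists_sum_qf_rpow_mul_rpow_eq_one hb hp 0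
  rw [growthRate_eq_log_weightSum ha hb hp hβ]
  simp only [Real.rpow_zero, one_mul] at hβ
  have hβ0 : 0 < β := by
    by_contra! hβ0
    have hsum : ∑ _j : Fin m, (1 : ℝ) ≤ ∑ j, b j ^ β := Finset.sum_le_sum fun j _ =>
      Real.one_le_rpow_of_pos_of_le_one_of_nonpos (hb j).1 (hb j).2.le hβ0
    have hm' : (2 : ℝ) ≤ m := by exact_mod_cast hm
    simp only [Finset.sum_const, Finset.card_univ, Fintype.card_fin, nsmul_eq_mul, mul_one,
      hβ] at hsum
    linarith
  obtain g := Classical.arbitrary (Alph m n)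
  refine Real.log_pos ?_
  calc 1 < a g ^ (-β) * b g.1 ^ β := by
        rw [Real.rpow_neg (ha g).1.le, inv_mul_eq_div,
          one_lt_div (Real.rpow_pos_of_pos (ha g).1 β)]
        exact Real.rpow_lt_rpow (ha g).1.le (ha g).2 hβ0
    _ = p g ^ (0 : ℝ) * a g ^ (r * 0 - β) * b g.1 ^ β := by simp
    _ ≤ weightSum a b p r 0 β := Finset.single_le_sum (f := fun g =>
        p g ^ (0 : ℝ) * a g ^ (r * 0 - β) * b g.1 ^ β) (fun g _ => by
          have := (ha g).1; have := (hb g.1).1; have := hp g; positivity) (Finset.mem_univ g)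

lemma growthRate_one_neg (ha : ∀ g, 0 < a g ∧ a g < b g.1) (hb : ∀ j, 0 < b j ∧ b j < 1)
    (hp : ∀ g, 0 < p g) (hp1 : ∑ g, p g = 1) (hr : 0 < r) : growthRate a b p r 1 < 0 := by
  have hβ : ∑ j, qf p j ^ (1 : ℝ) * b j ^ (0 : ℝ) = 1 := by simp [sum_qf, hp1]
  rw [growthRate_eq_log_weightSum ha hb hp hβ]
  refine Real.log_neg (weightSum_pos (fun g => (ha g).1) (fun j => (hb j).1) hp r 1 0) ?_
  calc weightSum a b p r 1 0 = ∑ g, p g * a g ^ r := by simp [weightSum]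
    _ < ∑ g, p g := Finset.sum_lt_sum_of_nonempty Finset.univ_nonempty fun g _ =>
        mul_lt_of_lt_one_right (hp g) (Real.rpow_lt_one (ha g).1.le ((ha g).2.trans (hb g.1).2) hr)
    _ = 1 := hp1

lemma exists_growthRate_eq_zero (hm : 2 ≤ m) (ha : ∀ g, 0 < a g ∧ a g < b g.1)
    (hb : ∀ j, 0 < b j ∧ b j < 1) (hp : ∀ g, 0 < p g) (hp1 : ∑ g, p g = 1) (hr : 0 < r) :
    ∃ t ∈ Set.Ioo (0 : ℝ) 1, growthRate a b p r t = 0 :=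
  intermediate_value_Ioo' zero_le_one (growthRate_continuous ha hb hp hp1 hr).continuousOn
    ⟨growthRate_one_neg ha hb hp hp1 hr, growthRate_zero_pos hm ha hb hp⟩

lemma exists_Ih_div_le_of_growthRate_eq_zero (ha : ∀ g, 0 < a g ∧ a g < b g.1)
    (hb : ∀ j, 0 < b j ∧ b j < 1) (hp : ∀ g, 0 < p g) {t : ℝ}
    (ht : growthRate a b p r t = 0) :
    ∃ C : ℝ, 1 ≤ C ∧ ∀ k l : ℕ, 1 ≤ k → 1 ≤ l →
      Ih a b p r k t / C ≤ Ih a b p r l t ∧ Ih a b p r l t ≤ C * Ih a b p r k t := by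
  obtain ⟨β, hβ⟩ := exists_sum_qf_rpow_mul_rpow_eq_one hb hp t
  obtain ⟨c, C, hc, h⟩ := exists_Ih_bounds (r := r) ha hb hp hβ
  have hK : weightSum a b p r t β = 1 := Real.eq_one_of_pos_of_log_eq_zero
    (weightSum_pos (fun g => (ha g).1) (fun j => (hb j).1) hp r t β)
    (growthRate_eq_log_weightSum ha hb hp hβ ▸ ht)
  simp only [hK, one_pow, mul_one] at h
  exact exists_div_le_and_le_mul_of_bounds hc h

end GrowthRate

theorem stmt14
    (m : ℕ) (hm : 2 ≤ m) (n : Fin m → ℕ) (hn : ∀ j, 1 ≤ n j)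
    (a : Alph m n → ℝ) (b : Fin m → ℝ)
    (hab : ∀ g : Alph m n, 0 < a g ∧ a g < b g.1 ∧ b g.1 < 1)
    (p : Alph m n → ℝ) (hp : ∀ g, 0 < p g) (hp1 : ∑ g : Alph m n, p g = 1)
    (r : ℝ) (hr : 0 < r) :
    (∀ t : ℝ, 0 ≤ t →
      ∃ g : ℝ, Tendsto (fun k : ℕ => Real.log (Ih a b p r k t) / k) atTop (𝓝 g)) ∧
    (∃! s : ℝ, 0 < s ∧
      Tendsto (fun k : ℕ => Real.log (Ih a b p r k (s / (s + r))) / k) atTop (𝓝 0)) ∧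
    (∀ s : ℝ, 0 < s →
      Tendsto (fun k : ℕ => Real.log (Ih a b p r k (s / (s + r))) / k) atTop (𝓝 0) →
      ∃ C : ℝ, 1 ≤ C ∧ ∀ k l : ℕ, 1 ≤ k → 1 ≤ l →
        Ih a b p r k (s / (s + r)) / C ≤ Ih a b p r l (s / (s + r)) ∧
        Ih a b p r l (s / (s + r)) ≤ C * Ih a b p r k (s / (s + r))) := by
  have : NeZero m := ⟨by omega⟩
  have : ∀ j, NeZero (n j) := fun j => ⟨by have := hn j; omega⟩
  have ha : ∀ g, 0 < a g ∧ a g < b g.1 := fun g => ⟨(hab g).1, (hab g).2.1⟩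
  have hb : ∀ j, 0 < b j ∧ b j < 1 := fun j =>
    have h := hab ⟨j, Classical.arbitrary _⟩
    ⟨h.1.trans h.2.1, h.2.2⟩
  have hlim := tendsto_growthRate (r := r) ha hb hp
  have hzero : ∀ s, Tendsto (fun k : ℕ => Real.log (Ih a b p r k (s / (s + r))) / k) atTop
      (𝓝 0) → growthRate a b p r (s / (s + r)) = 0 := fun s h => tendsto_nhds_unique (hlim _) h
  obtain ⟨t₀, ⟨ht₀, ht₀'⟩, hg₀⟩ := exists_growthRate_eq_zero hm ha hb hp hp1 hr
  have hs₀ : r * t₀ / (1 - t₀) / (r * t₀ / (1 - t₀) + r) = t₀ := by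
    field_simp [(sub_pos.2 ht₀').ne']
    ring
  refine ⟨fun t _ => ⟨_, hlim t⟩, ⟨r * t₀ / (1 - t₀), ⟨by have := sub_pos.2 ht₀'; positivity,
    by rw [hs₀, ← hg₀]; exact hlim t₀⟩, fun s hs => ?_⟩,
    fun s _ h => exists_Ih_div_le_of_growthRate_eq_zero ha hb hp (hzero s h)⟩
  have hst : s / (s + r) = t₀ :=
    (growthRate_strictAnti ha hb hp hp1 hr).injective ((hzero s hs.2).trans hg₀.symm)
  rw [← hst]
  field_simp [hr.ne', (add_pos hs.1 hr).ne']
  ring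

end

end LGQ
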